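/- For even n ≥ 2, j_{n-1}·j_{n+1} − (b/a)·j_n² = 2^{n-1}, where (j_n) is the bi-periodic Jacobsthal sequence. -/

import Mathlib

/-! Clearing the denominator, the claim is the Cassini-type identity
`a j_{2k+1} j_{2k+3} - b j_{2k+2}² = a 2^{2k+1}`; its left side is multiplied by `4` when `k`
increases by one, as three applications of the recurrence show. -/

noncomputable def jj (a b : ℝ) : ℕ → ℝ
  | 0 => 0
  | 1 => 1
  | n + 2 => (if Even (n + 2) then a else b) * jj a b (n + 1) + 2 * jj a b n

section
variable (a b : ℝ)

lemma jj_add_two_of_even {n : ℕ} (hn : Even n) :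
    jj a b (n + 2) = a * jj a b (n + 1) + 2 * jj a b n := by
  simp [jj, Nat.even_add_one, hn]

lemma jj_add_two_of_odd {n : ℕ} (hn : Odd n) :
    jj a b (n + 2) = b * jj a b (n + 1) + 2 * jj a b n := by
  simp [jj, Nat.even_add_one, Nat.not_even_iff_odd.mpr hn]

lemma jj_cassini_even (k : ℕ) :
    a * jj a b (2 * k + 1) * jj a b (2 * k + 3) - b * jj a b (2 * k + 2) ^ 2
      = a * 2 ^ (2 * k + 1) := by
  induction k with
  | zero => norm_num [jj, Nat.even_iff]; ring
  | succ k ih =>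
    have hz := jj_add_two_of_odd a b (n := 2 * k + 1) (by simp)
    have hw := jj_add_two_of_even a b (n := 2 * k + 2) (by simp [parity_simps])
    have hv := jj_add_two_of_odd a b (n := 2 * k + 3) (by simp [parity_simps])
    rw [show 2 * (k + 1) + 1 = 2 * k + 3 by ring, show 2 * (k + 1) + 2 = 2 * k + 4 by ring,
      show 2 * (k + 1) + 3 = 2 * k + 5 by ring]
    linear_combination a * jj a b (2 * k + 3) * hv
      - b * (jj a b (2 * k + 4) + 2 * jj a b (2 * k + 2)) * hw
      + 2 * a * jj a b (2 * k + 3) * hz + 4 * ih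

end

theorem stmt17 (a b : ℝ) (ha : a ≠ 0) (n : ℕ) (hn : 2 ≤ n) (he : Even n) :
    jj a b (n - 1) * jj a b (n + 1) - (b / a) * jj a b n ^ 2 = 2 ^ (n - 1) := by
  obtain ⟨k, rfl⟩ : ∃ k, n = 2 * k + 2 := by
    obtain ⟨m, rfl⟩ := he
    exact ⟨m - 1, by omega⟩
  rw [show 2 * k + 2 - 1 = 2 * k + 1 by omega]
  field_simp
  linear_combination jj_cassini_even a b k
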